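/- Let R be an algebraic curvature tensor on ℝ³ (dimension 3). Then the curvature tensor of the Riemannian product with ℝ (equivalently, condition: R(e₁,e₃,e₁,e₃) + λ²R(e₁,e₄,e₁,e₄) + R(e₂,e₃,e₂,e₃) + λ²R(e₂,e₄,e₂,e₄) − 2λR(e₁,e₂,e₃,e₄) ≥ 0 on the product ℝ³×ℝ for all four-frames) has nonnegative isotropic curvature if and only if the Ricci curvature of R is nonnegative, i.e. Ric(v,v) = Σ_k R(v,e_k,v,e_k) ≥ 0 for all v. -/

import Mathlib

noncomputable section
open scoped BigOperators

def dotp {n : ℕ} (X Y : Fin n → ℝ) : ℝ := ∑ i, X i * Y i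

def ON4 {n : ℕ} (e₁ e₂ e₃ e₄ : Fin n → ℝ) : Prop :=
  dotp e₁ e₁ = 1 ∧ dotp e₂ e₂ = 1 ∧ dotp e₃ e₃ = 1 ∧ dotp e₄ e₄ = 1 ∧
  dotp e₁ e₂ = 0 ∧ dotp e₁ e₃ = 0 ∧ dotp e₁ e₄ = 0 ∧
  dotp e₂ e₃ = 0 ∧ dotp e₂ e₄ = 0 ∧ dotp e₃ e₄ = 0

/-- The standard basis of `ℝ³`. -/
def stdBasis3 (k : Fin 3) : Fin 3 → ℝ := fun i => if i = k then 1 else 0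

/-!
In dimension three an algebraic curvature tensor is determined by its Ricci tensor: writing
`R(X,Y,Z,W) = (X × Y) ⬝ C (Z × W)` with a symmetric matrix `C` turns
`R(X,Y,Z,W) = Ric(X,Z)⟨Y,W⟩ + Ric(Y,W)⟨X,Z⟩ - Ric(X,W)⟨Y,Z⟩ - Ric(Y,Z)⟨X,W⟩
  - (S/2)(⟨X,Z⟩⟨Y,W⟩ - ⟨X,W⟩⟨Y,Z⟩)`
into a polynomial identity.

Split an orthonormal frame of `ℝ³ × ℝ` as `eᵢ = (uᵢ, tᵢ)`. Then `⟨uᵢ, uⱼ⟩ = δᵢⱼ - tᵢtⱼ`, and since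
the columns of an orthogonal matrix are orthonormal too, the `uᵢ` form a Parseval frame of `ℝ³`,
so that `∑ᵢ Ric(uᵢ, uᵢ) = S`. With these, the formula above shows that the isotropic curvature of
the product is `Ric(ξ, ξ) + Ric(η, η)`, where
`ξ + iη = (t₁ - i t₂)(u₁ + i u₂) + (t₃ - i t₄)(u₃ + i u₄)`.
Conversely, for an orthonormal basis `a, b, v` of `ℝ³` the frame `(a,0), (b,0), (v,0), (0,1)` has
isotropic curvature `R(a,v,a,v) + R(b,v,b,v) = Ric(v,v)`.
-/

open Matrix

section

variable {n : ℕ}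

theorem sum_bilinForm_self_eq_of_transpose_mul_self_eq_one {ι : Type*} [Fintype ι]
    (B : LinearMap.BilinForm ℝ (Fin n → ℝ)) (u : ι → Fin n → ℝ) (hu : (of u)ᵀ * of u = 1) :
    ∑ i, B (u i) (u i) = ∑ k, B (Pi.single k 1) (Pi.single k 1) := by
  set M := LinearMap.toMatrix₂' ℝ B
  have hB : ∀ x y, B x y = x ⬝ᵥ M *ᵥ y := fun x y => by
    rw [← Matrix.toLinearMap₂'_apply', Matrix.toLinearMap₂'_toMatrix']
  calc ∑ i, B (u i) (u i) = ∑ a, ∑ b, M a b * ((of u)ᵀ * of u) a b := by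
        simp only [hB, dotProduct, mulVec, mul_apply, transpose_apply, of_apply, Finset.mul_sum]
        rw [Finset.sum_comm]
        refine Finset.sum_congr rfl fun a _ => ?_
        rw [Finset.sum_comm]
        exact Finset.sum_congr rfl fun b _ => Finset.sum_congr rfl fun i _ => by ring
    _ = ∑ k, B (Pi.single k 1) (Pi.single k 1) := by
        simp [hu, one_apply, M, LinearMap.toMatrix₂'_apply]

theorem dotProduct_comp_castSucc (x y : Fin (n + 1) → ℝ) :
    (x ∘ Fin.castSucc) ⬝ᵥ (y ∘ Fin.castSucc) = x ⬝ᵥ y - x (Fin.last n) * y (Fin.last n) := by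
  simp [dotProduct, Fin.sum_univ_castSucc]

theorem snoc_dotProduct_snoc (x y : Fin n → ℝ) (s t : ℝ) :
    (Fin.snoc x s : Fin (n + 1) → ℝ) ⬝ᵥ Fin.snoc y t = x ⬝ᵥ y + s * t := by
  simp [dotProduct, Fin.sum_univ_castSucc]

theorem dotProduct_comp_castSucc_of_mul_transpose_eq_one {m : ℕ}
    {E : Matrix (Fin m) (Fin (n + 1)) ℝ} (hE : E * Eᵀ = 1) (i j : Fin m) :
    (E i ∘ Fin.castSucc) ⬝ᵥ (E j ∘ Fin.castSucc) =
      (if i = j then 1 else 0) - E i (Fin.last n) * E j (Fin.last n) := by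
  rw [dotProduct_comp_castSucc, ← one_apply, ← hE]
  rfl

theorem transpose_mul_self_comp_castSucc {m : ℕ} {E : Matrix (Fin m) (Fin (n + 1)) ℝ}
    (hE : Eᵀ * E = 1) :
    (of fun i => E i ∘ Fin.castSucc)ᵀ * of (fun i => E i ∘ Fin.castSucc) = 1 := by
  ext a b
  simpa [mul_apply, one_apply] using congr_fun₂ hE a.castSucc b.castSucc

theorem exists_orthonormal_rows_smul_eq (v : Fin n → ℝ) (j : Fin n) :
    ∃ b : Fin n → Fin n → ℝ, of b * (of b)ᵀ = 1 ∧ ∃ r : ℝ, v = r • b j := by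
  let x : EuclideanSpace ℝ (Fin n) := WithLp.toLp 2 v
  by_cases hx : x = 0
  · refine ⟨fun i => Pi.single i 1, ?_, 0, ?_⟩
    · ext i k
      simp [mul_apply, Pi.single_apply, one_apply, eq_comm]
    · simpa [x] using hx
  have hunit : Orthonormal ℝ (({j} : Set (Fin n)).domRestrict fun _ => ‖x‖⁻¹ • x) := by
    rw [orthonormal_iff_ite]
    rintro ⟨i, rfl⟩ ⟨k, rfl⟩
    simp [norm_smul, hx]
  obtain ⟨b, hb⟩ := hunit.exists_orthonormalBasis_extension_of_card_eq (by simp)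
  refine ⟨fun i => (b i).ofLp, ?_, ‖x‖, ?_⟩
  · ext i k
    have := b.orthonormal
    rw [orthonormal_iff_ite] at this
    simpa [mul_apply, one_apply, EuclideanSpace.inner_eq_star_dotProduct, dotProduct, mul_comm]
      using this i k
  · show v = ‖x‖ • (b j).ofLp
    rw [hb j rfl, WithLp.ofLp_smul, smul_smul, mul_inv_cancel₀ (norm_ne_zero_iff.mpr hx), one_smul]

theorem dotp_eq_dotProduct (x y : Fin n → ℝ) : dotp x y = x ⬝ᵥ y :=
  rfl

theorem ON4.mul_transpose_eq_one {e₁ e₂ e₃ e₄ : Fin n → ℝ} (h : ON4 e₁ e₂ e₃ e₄) :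
    of ![e₁, e₂, e₃, e₄] * (of ![e₁, e₂, e₃, e₄])ᵀ = 1 := by
  obtain ⟨h11, h22, h33, h44, h12, h13, h14, h23, h24, h34⟩ := h
  simp only [dotp] at h11 h22 h33 h44 h12 h13 h14 h23 h24 h34
  ext i j
  fin_cases i <;> fin_cases j <;> simp [mul_apply, one_apply, mul_comm] <;> assumption

theorem ON4_snoc_of_mul_transpose_eq_one {b : Fin 3 → Fin n → ℝ} (hb : of b * (of b)ᵀ = 1) :
    ON4 (Fin.snoc (b 0) 0) (Fin.snoc (b 1) 0) (Fin.snoc (b 2) 0)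
      (Fin.snoc 0 1 : Fin (n + 1) → ℝ) := by
  have hb' : ∀ i j, b i ⬝ᵥ b j = if i = j then 1 else 0 := fun i j => by
    rw [← one_apply, ← hb]
    rfl
  simp [ON4, dotp_eq_dotProduct, snoc_dotProduct_snoc, hb']

theorem update_vecFour_zero {α : Type*} (a b c d x : α) :
    Function.update ![a, b, c, d] 0 x = ![x, b, c, d] := by
  ext i; fin_cases i <;> rfl

theorem update_vecFour_two {α : Type*} (a b c d x : α) :
    Function.update ![a, b, c, d] 2 x = ![a, b, x, d] := by
  ext i; fin_cases i <;> rfl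

section Curvature

variable (R : MultilinearMap ℝ (fun _ : Fin 4 => Fin n → ℝ) ℝ)

def curvatureForm (x y : Fin n → ℝ) : LinearMap.BilinForm ℝ (Fin n → ℝ) :=
  LinearMap.mk₂ ℝ (fun v w => R ![v, x, w, y])
    (fun v v' w => by
      simpa only [update_vecFour_zero] using R.map_update_add ![v, x, w, y] 0 v v')
    (fun c v w => by
      simpa only [update_vecFour_zero] using R.map_update_smul ![v, x, w, y] 0 c v)
    (fun v w w' => by
      simpa only [update_vecFour_two] using R.map_update_add ![v, x, w, y] 2 w w')
    (fun c v w => by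
      simpa only [update_vecFour_two] using R.map_update_smul ![v, x, w, y] 2 c w)

@[simp]
theorem curvatureForm_apply (x y v w : Fin n → ℝ) : curvatureForm R x y v w = R ![v, x, w, y] :=
  rfl

def ricci : LinearMap.BilinForm ℝ (Fin n → ℝ) :=
  ∑ k, curvatureForm R (Pi.single k 1) (Pi.single k 1)

theorem ricci_apply (v w : Fin n → ℝ) :
    ricci R v w = ∑ k, R ![v, Pi.single k 1, w, Pi.single k 1] := by
  simp [ricci, LinearMap.sum_apply]

def scalarCurvature : ℝ := ∑ k, ricci R (Pi.single k 1) (Pi.single k 1)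

def isotropicCurvature (e₁ e₂ e₃ e₄ : Fin n → ℝ) : ℝ :=
  R ![e₁, e₃, e₁, e₃] + R ![e₁, e₄, e₁, e₄] + R ![e₂, e₃, e₂, e₃]
    + R ![e₂, e₄, e₂, e₄] - 2 * R ![e₁, e₂, e₃, e₄]

theorem isotropicCurvature_zero (e₁ e₂ e₃ : Fin n → ℝ) :
    isotropicCurvature R e₁ e₂ e₃ 0 = R ![e₁, e₃, e₁, e₃] + R ![e₂, e₃, e₂, e₃] := by
  simp [isotropicCurvature, R.map_coord_zero (m := ![_, 0, _, _]) 1 rfl,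
    R.map_coord_zero (m := ![_, _, _, 0]) 3 rfl]

theorem compLinearMap_castSucc_apply (a b c d : Fin (n + 1) → ℝ) :
    R.compLinearMap (fun _ => LinearMap.funLeft ℝ ℝ Fin.castSucc) ![a, b, c, d] =
      R ![a ∘ Fin.castSucc, b ∘ Fin.castSucc, c ∘ Fin.castSucc, d ∘ Fin.castSucc] := by
  rw [MultilinearMap.compLinearMap_apply]
  congr 1
  ext i
  fin_cases i <;> rfl

theorem isotropicCurvature_compLinearMap_castSucc (e₁ e₂ e₃ e₄ : Fin (n + 1) → ℝ) :
    isotropicCurvature (R.compLinearMap fun _ => LinearMap.funLeft ℝ ℝ Fin.castSucc) e₁ e₂ e₃ e₄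
      = isotropicCurvature R (e₁ ∘ Fin.castSucc) (e₂ ∘ Fin.castSucc) (e₃ ∘ Fin.castSucc)
          (e₄ ∘ Fin.castSucc) := by
  simp only [isotropicCurvature, compLinearMap_castSucc_apply]

theorem ricci_comm (hpair : ∀ X Y Z W, R ![X, Y, Z, W] = R ![Z, W, X, Y]) (v w : Fin n → ℝ) :
    ricci R v w = ricci R w v := by
  simp only [ricci_apply, hpair v]

theorem ricci_self_eq_sum_of_mul_transpose_eq_one
    (hanti : ∀ X Y Z W, R ![X, Y, Z, W] = -R ![Y, X, Z, W])
    (hpair : ∀ X Y Z W, R ![X, Y, Z, W] = R ![Z, W, X, Y])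
    {b : Fin n → Fin n → ℝ} (hb : of b * (of b)ᵀ = 1) (v : Fin n → ℝ) :
    ricci R v v = ∑ k, R ![b k, v, b k, v] := by
  have hswap : ∀ X Y Z W, R ![X, Y, Z, W] = R ![Y, X, W, Z] := fun X Y Z W => by
    rw [hanti, hpair, hanti, hpair, neg_neg]
  rw [ricci_apply]
  simp only [hswap v]
  exact (sum_bilinForm_self_eq_of_transpose_mul_self_eq_one (curvatureForm R v v) b
    (mul_eq_one_comm.mp hb)).symm

end Curvature

end

theorem LinearMap.apply_eq_sum_cross_of_apply_self {K M : Type*} [CommRing K] [AddCommGroup M]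
    [Module K M] (f : (Fin 3 → K) →ₗ[K] (Fin 3 → K) →ₗ[K] M) (hf : ∀ x, f x x = 0)
    (x y : Fin 3 → K) :
    f x y = ∑ a, (x ⨯₃ y) a • f (Pi.single (a + 1) 1) (Pi.single (a + 2) 1) := by
  have hanti : ∀ u v, f v u = -f u v := fun u v => by
    have := hf (u + v)
    simp only [map_add, LinearMap.add_apply, hf, zero_add, add_zero] at this
    exact eq_neg_of_add_eq_zero_left this
  conv_lhs => rw [pi_eq_sum_univ' x, pi_eq_sum_univ' y]
  simp only [map_sum, map_smul, LinearMap.sum_apply, LinearMap.smul_apply]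
  simp only [Fin.sum_univ_three, hf, hanti (Pi.single 0 1) (Pi.single 1 1),
    hanti (Pi.single 0 1) (Pi.single 2 1), hanti (Pi.single 1 1) (Pi.single 2 1), cross_apply,
    Fin.isValue, Fin.reduceAdd, cons_val_zero, cons_val_one, cons_val]
  module

section DimThree

variable (R : MultilinearMap ℝ (fun _ : Fin 4 => Fin 3 → ℝ) ℝ)

theorem apply_eq_sum_cross_left
    (hanti : ∀ X Y Z W, R ![X, Y, Z, W] = -R ![Y, X, Z, W]) (X Y Z W : Fin 3 → ℝ) :
    R ![X, Y, Z, W] =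
      ∑ a, (X ⨯₃ Y) a * R ![Pi.single (a + 1) 1, Pi.single (a + 2) 1, Z, W] := by
  -- `f X Y = R (X, Y, -, -)`
  let f : (Fin 3 → ℝ) →ₗ[ℝ] (Fin 3 → ℝ) →ₗ[ℝ] MultilinearMap ℝ (fun _ : Fin 2 => Fin 3 → ℝ) ℝ :=
    (multilinearCurryLeftEquiv ℝ (fun _ : Fin 3 => Fin 3 → ℝ) ℝ).toLinearMap ∘ₗ R.curryLeft
  have hf : ∀ x, f x x = 0 := fun x => MultilinearMap.ext fun m => by
    have hm : m = ![m 0, m 1] := by ext i; fin_cases i <;> rfl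
    rw [hm]
    show R ![x, x, m 0, m 1] = 0
    linarith [hanti x x (m 0) (m 1)]
  refine (congrArg (· ![Z, W]) (f.apply_eq_sum_cross_of_apply_self hf X Y)).trans ?_
  simp [f]

def curvatureMatrix : Matrix (Fin 3) (Fin 3) ℝ :=
  of fun a b =>
    R ![Pi.single (a + 1) 1, Pi.single (a + 2) 1, Pi.single (b + 1) 1, Pi.single (b + 2) 1]

theorem curvatureMatrix_comm (hpair : ∀ X Y Z W, R ![X, Y, Z, W] = R ![Z, W, X, Y]) (a b : Fin 3) :
    curvatureMatrix R a b = curvatureMatrix R b a :=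
  hpair ..

theorem apply_eq_cross_dotProduct_mulVec_cross
    (hanti : ∀ X Y Z W, R ![X, Y, Z, W] = -R ![Y, X, Z, W])
    (hpair : ∀ X Y Z W, R ![X, Y, Z, W] = R ![Z, W, X, Y]) (X Y Z W : Fin 3 → ℝ) :
    R ![X, Y, Z, W] = (X ⨯₃ Y) ⬝ᵥ (curvatureMatrix R *ᵥ (Z ⨯₃ W)) := by
  rw [apply_eq_sum_cross_left R hanti, dotProduct]
  refine Finset.sum_congr rfl fun a _ => ?_
  rw [hpair, apply_eq_sum_cross_left R hanti]
  simp only [mulVec, dotProduct, Finset.mul_sum]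
  refine Finset.sum_congr rfl fun b _ => ?_
  rw [hpair]
  simp only [curvatureMatrix, of_apply]
  ring

theorem apply_eq_ricci_of_dim_three
    (hanti : ∀ X Y Z W, R ![X, Y, Z, W] = -R ![Y, X, Z, W])
    (hpair : ∀ X Y Z W, R ![X, Y, Z, W] = R ![Z, W, X, Y]) (X Y Z W : Fin 3 → ℝ) :
    R ![X, Y, Z, W] = ricci R X Z * (Y ⬝ᵥ W) + ricci R Y W * (X ⬝ᵥ Z)
      - ricci R X W * (Y ⬝ᵥ Z) - ricci R Y Z * (X ⬝ᵥ W)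
      - scalarCurvature R / 2 * ((X ⬝ᵥ Z) * (Y ⬝ᵥ W) - (X ⬝ᵥ W) * (Y ⬝ᵥ Z)) := by
  simp only [scalarCurvature, ricci_apply, apply_eq_cross_dotProduct_mulVec_cross R hanti hpair]
  simp only [dotProduct, mulVec, cross_apply, Fin.sum_univ_three, Fin.isValue, cons_val_zero,
    cons_val_one, cons_val, Pi.single_apply, Fin.reduceEq, ↓reduceIte]
  rw [curvatureMatrix_comm R hpair 1 0, curvatureMatrix_comm R hpair 2 0,
    curvatureMatrix_comm R hpair 2 1]
  ring

theorem isotropicCurvature_eq_ricci_add_ricci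
    (hanti : ∀ X Y Z W, R ![X, Y, Z, W] = -R ![Y, X, Z, W])
    (hpair : ∀ X Y Z W, R ![X, Y, Z, W] = R ![Z, W, X, Y])
    (u : Fin 4 → Fin 3 → ℝ) (t : Fin 4 → ℝ)
    (hgram : ∀ i j, u i ⬝ᵥ u j = (if i = j then 1 else 0) - t i * t j) (hu : (of u)ᵀ * of u = 1) :
    isotropicCurvature R (u 0) (u 1) (u 2) (u 3) =
      ricci R (t 0 • u 0 + t 1 • u 1 + t 2 • u 2 + t 3 • u 3)
          (t 0 • u 0 + t 1 • u 1 + t 2 • u 2 + t 3 • u 3)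
        + ricci R (t 0 • u 1 - t 1 • u 0 + t 2 • u 3 - t 3 • u 2)
          (t 0 • u 1 - t 1 • u 0 + t 2 • u 3 - t 3 • u 2) := by
  have htrace : ∑ i, ricci R (u i) (u i) = scalarCurvature R :=
    sum_bilinForm_self_eq_of_transpose_mul_self_eq_one (ricci R) u hu
  simp only [Fin.sum_univ_four] at htrace
  simp only [isotropicCurvature, apply_eq_ricci_of_dim_three R hanti hpair, hgram, map_add,
    map_sub, map_smul, LinearMap.add_apply, LinearMap.sub_apply, LinearMap.smul_apply, smul_eq_mul]
  simp only [ricci_comm R hpair (u 1) (u 0), ricci_comm R hpair (u 2) (u 0),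
    ricci_comm R hpair (u 3) (u 0), ricci_comm R hpair (u 2) (u 1),
    ricci_comm R hpair (u 3) (u 1), ricci_comm R hpair (u 3) (u 2)]
  simp only [Fin.isValue, Fin.reduceEq, if_true, if_false]
  linear_combination (2 - (t 0 ^ 2 + t 1 ^ 2 + t 2 ^ 2 + t 3 ^ 2)) * htrace

end DimThree

theorem product_with_line_nic_iff_ricci_nonneg_general
    (R : MultilinearMap ℝ (fun _ : Fin 4 => (Fin 3 → ℝ)) ℝ)
    (hanti : ∀ X Y Z W, R ![X, Y, Z, W] = - R ![Y, X, Z, W])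
    (hpair : ∀ X Y Z W, R ![X, Y, Z, W] = R ![Z, W, X, Y])
    -- the product curvature tensor on ℝ⁴ = ℝ³ × ℝ, extending R by zero
    (R4 : MultilinearMap ℝ (fun _ : Fin 4 => (Fin 4 → ℝ)) ℝ)
    (hR4 : R4 = R.compLinearMap
      (fun _ => LinearMap.funLeft ℝ ℝ (Fin.castSucc : Fin 3 → Fin 4))) :
    (∀ e₁ e₂ e₃ e₄ : Fin 4 → ℝ, ON4 e₁ e₂ e₃ e₄ →
      0 ≤ R4 ![e₁, e₃, e₁, e₃] + R4 ![e₁, e₄, e₁, e₄] + R4 ![e₂, e₃, e₂, e₃]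
          + R4 ![e₂, e₄, e₂, e₄] - 2 * R4 ![e₁, e₂, e₃, e₄]) ↔
    (∀ v : Fin 3 → ℝ, 0 ≤ ∑ k, R ![v, stdBasis3 k, v, stdBasis3 k]) := by
  subst hR4
  have hstd : stdBasis3 = fun k => Pi.single k 1 := by
    ext k i
    simp [stdBasis3, Pi.single_apply]
  simp only [hstd, ← ricci_apply]
  change (∀ e₁ e₂ e₃ e₄, ON4 e₁ e₂ e₃ e₄ → 0 ≤ isotropicCurvature _ e₁ e₂ e₃ e₄) ↔ _
  simp only [isotropicCurvature_compLinearMap_castSucc]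
  constructor
  · intro hNIC v
    obtain ⟨b, hb, r, rfl⟩ := exists_orthonormal_rows_smul_eq v 2
    have hframe := hNIC _ _ _ _ (ON4_snoc_of_mul_transpose_eq_one hb)
    simp only [Fin.snoc_comp_castSucc, isotropicCurvature_zero] at hframe
    simp only [map_smul, LinearMap.smul_apply, smul_eq_mul]
    rw [ricci_self_eq_sum_of_mul_transpose_eq_one R hanti hpair hb, Fin.sum_univ_three,
      show R ![b 2, b 2, b 2, b 2] = 0 by linarith [hanti (b 2) (b 2) (b 2) (b 2)], add_zero,
      ← mul_assoc]
    exact mul_nonneg (mul_self_nonneg r) hframe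
  · intro hRic e₁ e₂ e₃ e₄ hON
    have hE := hON.mul_transpose_eq_one
    refine le_of_le_of_eq (add_nonneg (hRic _) (hRic _)) (isotropicCurvature_eq_ricci_add_ricci R
      hanti hpair _ _ (dotProduct_comp_castSucc_of_mul_transpose_eq_one hE)
      (transpose_mul_self_comp_castSucc (mul_eq_one_comm.mp hE))).symm

theorem product_with_line_nic_iff_ricci_nonneg
    (R : MultilinearMap ℝ (fun _ : Fin 4 => (Fin 3 → ℝ)) ℝ)
    (hanti : ∀ X Y Z W, R ![X, Y, Z, W] = - R ![Y, X, Z, W])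
    (hpair : ∀ X Y Z W, R ![X, Y, Z, W] = R ![Z, W, X, Y])
    (hbianchi : ∀ X Y Z W,
      R ![X, Y, Z, W] + R ![Y, Z, X, W] + R ![Z, X, Y, W] = 0)
    -- the product curvature tensor on ℝ⁴ = ℝ³ × ℝ, extending R by zero
    (R4 : MultilinearMap ℝ (fun _ : Fin 4 => (Fin 4 → ℝ)) ℝ)
    (hR4 : R4 = R.compLinearMap
      (fun _ => LinearMap.funLeft ℝ ℝ (Fin.castSucc : Fin 3 → Fin 4))) :
    (∀ e₁ e₂ e₃ e₄ : Fin 4 → ℝ, ON4 e₁ e₂ e₃ e₄ →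
      0 ≤ R4 ![e₁, e₃, e₁, e₃] + R4 ![e₁, e₄, e₁, e₄] + R4 ![e₂, e₃, e₂, e₃]
          + R4 ![e₂, e₄, e₂, e₄] - 2 * R4 ![e₁, e₂, e₃, e₄]) ↔
    (∀ v : Fin 3 → ℝ, 0 ≤ ∑ k, R ![v, stdBasis3 k, v, stdBasis3 k]) :=
  product_with_line_nic_iff_ricci_nonneg_general R hanti hpair R4 hR4
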